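/- Let y̅ ∈ D ⊆ ℝ^s with D closed, and define iterated tangent cones by T⁰_D(y̅) := T_D(y̅) and T^k_D(y̅; v₁,…,v_k) := T_{T^{k−1}_D(y̅; v₁,…,v_{k−1})}(v_k) for k ≥ 1. Then for every collection of directions v₁,…,v_l ∈ ℝ^s one has the chain of inclusions N̂_{T^{l−1}_D(y̅;v₁,…,v_{l−1})}(v_l) ⊆ N_{T^{l−1}_D(y̅;v₁,…,v_{l−1})}(v_l) ⊆ N_{T_D(y̅)}(0) ⊆ N_D(y̅). -/

import Mathlib

open Set Filter Topology Metric Pointwise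

noncomputable section

abbrev Rd (d : ℕ) := EuclideanSpace ℝ (Fin d)

/-- Tangent (contingent) cone: w such that ∃ t_k ↓ 0, w_k → w with z + t_k w_k ∈ Ω. -/
def tangentConeSeq {E : Type*} [NormedAddCommGroup E] [NormedSpace ℝ E]
    (Ω : Set E) (z : E) : Set E :=
  {w | ∃ t : ℕ → ℝ, ∃ wk : ℕ → E,
    (∀ k, 0 < t k) ∧ Tendsto t atTop (nhds 0) ∧
    Tendsto wk atTop (nhds w) ∧ ∀ k, z + t k • wk k ∈ Ω}

/-- Regular (Fréchet) normal cone: polar of the tangent cone (empty outside Ω). -/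
def regNormal {E : Type*} [NormedAddCommGroup E] [InnerProductSpace ℝ E]
    (Ω : Set E) (z : E) : Set E :=
  {v | z ∈ Ω ∧ ∀ w ∈ tangentConeSeq Ω z, (inner ℝ v w : ℝ) ≤ 0}

/-- Limiting (Mordukhovich) normal cone. -/
def limNormal {E : Type*} [NormedAddCommGroup E] [InnerProductSpace ℝ E]
    (Ω : Set E) (z : E) : Set E :=
  {v | ∃ zk vk : ℕ → E, (∀ k, zk k ∈ Ω) ∧ (∀ k, vk k ∈ regNormal Ω (zk k)) ∧
    Tendsto zk atTop (nhds z) ∧ Tendsto vk atTop (nhds v)}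

/-- Polar cone of a set. -/
def polarCone {E : Type*} [NormedAddCommGroup E] [InnerProductSpace ℝ E]
    (K : Set E) : Set E :=
  {v | ∀ w ∈ K, (inner ℝ v w : ℝ) ≤ 0}

/-- Lsp(C): largest subspace L with C + L ⊆ C (the union of all such subspaces). -/
def Lsp {E : Type*} [NormedAddCommGroup E] [NormedSpace ℝ E] (C : Set E) : Set E :=
  {l | ∃ L : Submodule ℝ E, (∀ c ∈ C, ∀ x ∈ L, c + x ∈ C) ∧ l ∈ L}

/-- A cone: closed under multiplication by nonnegative scalars. -/
def IsCone {E : Type*} [NormedAddCommGroup E] [NormedSpace ℝ E] (C : Set E) : Prop :=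
  ∀ c ∈ C, ∀ t : ℝ, 0 ≤ t → t • c ∈ C

/-- Metric subregularity of a set-valued map M at (z, w) ∈ Gr M. -/
def MetricallySubregular {E F : Type*} [NormedAddCommGroup E] [NormedSpace ℝ E]
    [NormedAddCommGroup F] [NormedSpace ℝ F] (M : E → Set F) (z : E) (w : F) : Prop :=
  w ∈ M z ∧ ∃ κ > (0:ℝ), ∃ U ∈ nhds z, ∀ z' ∈ U,
    infDist z' {x | w ∈ M x} ≤ κ * infDist w (M z')

/-- Convex polyhedral: finite intersection of closed halfspaces. -/
def IsConvexPolyhedral {E : Type*} [NormedAddCommGroup E] [NormedSpace ℝ E]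
    (C : Set E) : Prop :=
  ∃ (n : ℕ) (a : Fin n → (E →L[ℝ] ℝ)) (α : Fin n → ℝ), C = {z | ∀ i, a i z ≤ α i}

/-- Polyhedral: finite union of convex polyhedral sets. -/
def IsPolyhedral {E : Type*} [NormedAddCommGroup E] [NormedSpace ℝ E]
    (C : Set E) : Prop :=
  ∃ (n : ℕ) (Ci : Fin n → Set E), (∀ i, IsConvexPolyhedral (Ci i)) ∧ C = ⋃ i, Ci i

/-- Locally polyhedral near a point. -/
def LocallyPolyhedral {E : Type*} [NormedAddCommGroup E] [NormedSpace ℝ E]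
    (Ω : Set E) (z : E) : Prop :=
  ∃ W ∈ nhds z, ∃ C : Set E, IsPolyhedral C ∧ Ω ∩ W = C ∩ W

/-- Normal cone of convex analysis. -/
def convNormal {E : Type*} [NormedAddCommGroup E] [InnerProductSpace ℝ E]
    (K : Set E) (v : E) : Set E :=
  {z | v ∈ K ∧ ∀ w ∈ K, (inner ℝ z (w - v) : ℝ) ≤ 0}

/-- Regular normal cone for subsets of a product of inner product spaces
(with the natural product inner product in the pairing). -/
def regNormal2 {E F : Type*} [NormedAddCommGroup E] [InnerProductSpace ℝ E]
    [NormedAddCommGroup F] [InnerProductSpace ℝ F] (Ω : Set (E × F)) (z : E × F) :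
    Set (E × F) :=
  {v | z ∈ Ω ∧ ∀ w ∈ tangentConeSeq Ω z,
    (inner ℝ v.1 w.1 : ℝ) + (inner ℝ v.2 w.2 : ℝ) ≤ 0}

/-- Iterated tangent cones: the head of the list is the most recent direction,
so `iterTangent D y [vₗ, …, v₁] = T^{l}_D(y; v₁,…,vₗ)`. -/
def iterTangent {E : Type*} [NormedAddCommGroup E] [NormedSpace ℝ E]
    (D : Set E) (y : E) : List E → Set E
  | [] => tangentConeSeq D y
  | v :: vs => tangentConeSeq (iterTangent D y vs) v

/-!
Projecting `y + t • p` onto `D` for small `t > 0` and rescaling shows: for every `p` and every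
`w ∈ T_D(y)` there is `u ∈ T_D(y)` at least as close to `p` as `w` with `p - u ∈ N_D(y)`.
For `v ∈ N̂_{T_D(y)}(w)` take `p = w + ε • v`; then `v - d ∈ N_D(y)` with `d = ε⁻¹ • (u - w)`,
`‖v - d‖ ≤ ‖v‖` and `w + ε • d ∈ T_D(y)`. As `ε → 0`, every cluster point `L` of `d` is
tangent to `T_D(y)` at `w`, so `⟪v, L⟫ ≤ 0`, which together with `‖v - L‖ ≤ ‖v‖` forces `L = 0`.
Since `N_D(y)` is closed, `N_{T_D(y)}(w) ⊆ N_D(y)`. This peels off the iterated tangent cones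
one at a time, and for the cone `K = T_D(y)` rescaling base points towards `0` gives
`N_K(w) ⊆ N_K(0)`.
-/

section TangentCone

variable {E : Type*} [NormedAddCommGroup E] [NormedSpace ℝ E]

theorem mem_tangentConeSeq_iff_mem_closure {Ω : Set E} {z w : E} :
    w ∈ tangentConeSeq Ω z ↔
      ((0 : ℝ), w) ∈ closure {p : ℝ × E | 0 < p.1 ∧ z + p.1 • p.2 ∈ Ω} := by
  rw [mem_closure_iff_seq_limit]
  constructor
  · rintro ⟨t, wk, hpos, ht, hw, hmem⟩
    exact ⟨fun k => (t k, wk k), fun k => ⟨hpos k, hmem k⟩, ht.prodMk_nhds hw⟩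
  · rintro ⟨p, hp, hlim⟩
    rw [Prod.tendsto_iff] at hlim
    exact ⟨fun k => (p k).1, fun k => (p k).2, fun k => (hp k).1, hlim.1, hlim.2,
      fun k => (hp k).2⟩

theorem isClosed_tangentConeSeq (Ω : Set E) (z : E) : IsClosed (tangentConeSeq Ω z) := by
  have h : tangentConeSeq Ω z = (fun w => ((0 : ℝ), w)) ⁻¹'
      closure {p : ℝ × E | 0 < p.1 ∧ z + p.1 • p.2 ∈ Ω} :=
    Set.ext fun _ => mem_tangentConeSeq_iff_mem_closure
  rw [h]
  exact isClosed_closure.preimage (by fun_prop)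

theorem smul_mem_tangentConeSeq {Ω : Set E} {z w : E} (hw : w ∈ tangentConeSeq Ω z)
    {c : ℝ} (hc : 0 < c) : c • w ∈ tangentConeSeq Ω z := by
  obtain ⟨t, wk, hpos, ht, hwk, hmem⟩ := hw
  refine ⟨fun k => t k / c, fun k => c • wk k, fun k => div_pos (hpos k) hc,
    by simpa using ht.div_const c, hwk.const_smul c, fun k => ?_⟩
  rw [smul_smul, div_mul_cancel₀ _ hc.ne']
  exact hmem k

theorem tangentConeSeq_smul_subset {K : Set E} (hK : ∀ c : ℝ, 0 < c → ∀ x ∈ K, c • x ∈ K)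
    (x : E) {c : ℝ} (hc : 0 < c) : tangentConeSeq K (c • x) ⊆ tangentConeSeq K x := by
  rintro w ⟨t, wk, hpos, ht, hwk, hmem⟩
  refine ⟨fun k => t k / c, wk, fun k => div_pos (hpos k) hc, by simpa using ht.div_const c,
    hwk, fun k => ?_⟩
  have h : x + (t k / c) • wk k = c⁻¹ • (c • x + t k • wk k) := by
    rw [smul_add, inv_smul_smul₀ hc.ne', smul_smul, div_eq_inv_mul]
  rw [h]
  exact hK _ (inv_pos.2 hc) _ (hmem k)

theorem isClosed_iterTangent (D : Set E) (y : E) (vs : List E) :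
    IsClosed (iterTangent D y vs) := by
  cases vs with
  | nil => exact isClosed_tangentConeSeq D y
  | cons v vs => exact isClosed_tangentConeSeq _ v

end TangentCone

section NormalCones

variable {E : Type*} [NormedAddCommGroup E] [InnerProductSpace ℝ E]

theorem regNormal_subset_limNormal (Ω : Set E) (z : E) : regNormal Ω z ⊆ limNormal Ω z :=
  fun v hv => ⟨fun _ => z, fun _ => v, fun _ => hv.1, fun _ => hv, tendsto_const_nhds,
    tendsto_const_nhds⟩

theorem smul_mem_regNormal {Ω : Set E} {z v : E} (hv : v ∈ regNormal Ω z) {c : ℝ}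
    (hc : 0 ≤ c) : c • v ∈ regNormal Ω z :=
  ⟨hv.1, fun w hw => by
    rw [real_inner_smul_left]
    exact mul_nonpos_of_nonneg_of_nonpos hc (hv.2 w hw)⟩

theorem smul_mem_limNormal {Ω : Set E} {z v : E} (hv : v ∈ limNormal Ω z) {c : ℝ}
    (hc : 0 ≤ c) : c • v ∈ limNormal Ω z := by
  obtain ⟨zk, vk, hzk, hvk, hz, hv⟩ := hv
  exact ⟨zk, fun k => c • vk k, hzk, fun k => smul_mem_regNormal (hvk k) hc, hz,
    hv.const_smul c⟩

theorem mem_limNormal_iff_mem_closure {Ω : Set E} {z v : E} :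
    v ∈ limNormal Ω z ↔ (z, v) ∈ closure {p : E × E | p.2 ∈ regNormal Ω p.1} := by
  rw [mem_closure_iff_seq_limit]
  constructor
  · rintro ⟨zk, vk, -, hvk, hz, hv⟩
    exact ⟨fun k => (zk k, vk k), hvk, hz.prodMk_nhds hv⟩
  · rintro ⟨p, hp, hlim⟩
    rw [Prod.tendsto_iff] at hlim
    exact ⟨fun k => (p k).1, fun k => (p k).2, fun k => (hp k).1, hp, hlim.1, hlim.2⟩

theorem isClosed_limNormal (Ω : Set E) (z : E) : IsClosed (limNormal Ω z) := by
  have h : limNormal Ω z = (fun v => (z, v)) ⁻¹' closure {p : E × E | p.2 ∈ regNormal Ω p.1} :=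
    Set.ext fun _ => mem_limNormal_iff_mem_closure
  rw [h]
  exact isClosed_closure.preimage (by fun_prop)

theorem regNormal_subset_regNormal_smul {K : Set E}
    (hK : ∀ c : ℝ, 0 < c → ∀ x ∈ K, c • x ∈ K) (x : E) {c : ℝ} (hc : 0 < c) :
    regNormal K x ⊆ regNormal K (c • x) :=
  fun _ hv => ⟨hK c hc x hv.1, fun w hw => hv.2 w (tangentConeSeq_smul_subset hK x hc hw)⟩

theorem limNormal_subset_limNormal_zero {K : Set E}
    (hK : ∀ c : ℝ, 0 < c → ∀ x ∈ K, c • x ∈ K) (x : E) : limNormal K x ⊆ limNormal K 0 := by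
  rintro v ⟨zk, vk, hzk, hvk, hz, hv⟩
  have hscale : ∀ k : ℕ, (0 : ℝ) < 1 / ((k : ℝ) + 1) := fun k => by positivity
  refine ⟨fun k => (1 / ((k : ℝ) + 1)) • zk k, vk, fun k => hK _ (hscale k) _ (hzk k),
    fun k => regNormal_subset_regNormal_smul hK _ (hscale k) (hvk k), ?_, hv⟩
  simpa using (tendsto_one_div_add_atTop_nhds_zero_nat (𝕜 := ℝ)).smul hz

theorem eq_zero_of_norm_sub_le_of_inner_nonpos {v L : E} (hnorm : ‖v - L‖ ≤ ‖v‖)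
    (hinner : inner ℝ v L ≤ 0) : L = 0 := by
  have hsq := norm_sub_sq_real v L
  have hL : ‖L‖ ^ 2 ≤ 0 := by nlinarith [norm_nonneg (v - L), norm_nonneg v]
  exact norm_eq_zero.1 (pow_eq_zero_iff two_ne_zero |>.1 (le_antisymm hL (sq_nonneg _)))

theorem sub_mem_regNormal_of_forall_norm_le {S : Set E} {p c : E} (hc : c ∈ S)
    (hmin : ∀ x ∈ S, ‖p - c‖ ≤ ‖p - x‖) : p - c ∈ regNormal S c := by
  refine ⟨hc, ?_⟩
  rintro w ⟨t, wk, hpos, ht, hwk, hmem⟩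
  have hk : ∀ k, 2 * inner ℝ (p - c) (wk k) ≤ t k * ‖wk k‖ ^ 2 := by
    intro k
    have h := hmin _ (hmem k)
    rw [show p - (c + t k • wk k) = (p - c) - t k • wk k by abel] at h
    have h2 := pow_le_pow_left₀ (norm_nonneg _) h 2
    rw [norm_sub_sq_real (p - c), real_inner_smul_right, norm_smul, Real.norm_eq_abs,
      abs_of_pos (hpos k)] at h2
    nlinarith [hpos k]
  have hlim := le_of_tendsto_of_tendsto' ((tendsto_const_nhds.inner hwk).const_mul 2)
    (ht.mul (hwk.norm.pow 2)) hk
  rw [zero_mul] at hlim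
  linarith

end NormalCones

section Proximal

variable {E : Type*} [NormedAddCommGroup E] [InnerProductSpace ℝ E] [ProperSpace E]

theorem exists_nearest_smul_sub_mem_regNormal {S : Set E} (hS : IsClosed S) (hne : S.Nonempty)
    (y p : E) {t : ℝ} (ht : 0 < t) :
    ∃ u, y + t • u ∈ S ∧ (∀ x, y + t • x ∈ S → ‖p - u‖ ≤ ‖p - x‖) ∧
      p - u ∈ regNormal S (y + t • u) := by
  obtain ⟨c, hc, hdist⟩ := hS.exists_infDist_eq_dist hne (y + t • p)
  have hmin : ∀ x ∈ S, ‖y + t • p - c‖ ≤ ‖y + t • p - x‖ := fun x hx => by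
    rw [← dist_eq_norm, ← dist_eq_norm, ← hdist]
    exact Metric.infDist_le_dist_of_mem hx
  have hscale : ∀ x, y + t • p - (y + t • x) = t • (p - x) := fun x => by
    rw [smul_sub]
    abel
  set u := t⁻¹ • (c - y)
  have hcu : y + t • u = c := by
    rw [smul_inv_smul₀ ht.ne']
    abel
  refine ⟨u, hcu ▸ hc, fun x hx => ?_, ?_⟩
  · have h := hmin _ hx
    rw [← hcu, hscale, hscale, norm_smul, norm_smul] at h
    exact le_of_mul_le_mul_left h (norm_pos_iff.2 ht.ne')
  · have hpu : p - u = t⁻¹ • (y + t • p - c) := by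
      rw [← hcu, hscale, inv_smul_smul₀ ht.ne']
    rw [hcu, hpu]
    exact smul_mem_regNormal (sub_mem_regNormal_of_forall_norm_le hc hmin) (inv_nonneg.2 ht.le)

theorem exists_mem_tangentConeSeq_sub_mem_limNormal {S : Set E} (hS : IsClosed S) {y w : E}
    (hw : w ∈ tangentConeSeq S y) (p : E) :
    ∃ u ∈ tangentConeSeq S y, ‖p - u‖ ≤ ‖p - w‖ ∧ p - u ∈ limNormal S y := by
  obtain ⟨t, wk, hpos, ht, hwk, hmem⟩ := hw
  choose u huS hmin hnormal using
    fun k => exists_nearest_smul_sub_mem_regNormal hS ⟨_, hmem 0⟩ y p (hpos k)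
  have hle : ∀ k, ‖p - u k‖ ≤ ‖p - wk k‖ := fun k => hmin k _ (hmem k)
  obtain ⟨C, hC⟩ := (tendsto_const_nhds.sub hwk).norm.bddAbove_range
  have hbdd : ∀ k, u k ∈ Metric.closedBall p C := fun k => by
    rw [Metric.mem_closedBall, dist_comm, dist_eq_norm]
    exact (hle k).trans (hC ⟨k, rfl⟩)
  obtain ⟨u₀, -, φ, hφ, huφ⟩ := tendsto_subseq_of_bounded Metric.isBounded_closedBall hbdd
  have htφ := ht.comp hφ.tendsto_atTop
  refine ⟨u₀, ⟨t ∘ φ, u ∘ φ, fun i => hpos _, htφ, huφ, fun i => huS _⟩, ?_, ?_⟩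
  · exact le_of_tendsto_of_tendsto' (tendsto_const_nhds.sub huφ).norm
      (tendsto_const_nhds.sub (hwk.comp hφ.tendsto_atTop)).norm fun i => hle _
  · refine ⟨fun i => y + t (φ i) • u (φ i), fun i => p - u (φ i), fun i => huS _,
      fun i => hnormal _, ?_, tendsto_const_nhds.sub huφ⟩
    simpa using tendsto_const_nhds.add (htφ.smul huφ)

theorem regNormal_tangentConeSeq_subset_limNormal {S : Set E} (hS : IsClosed S) (y w : E) :
    regNormal (tangentConeSeq S y) w ⊆ limNormal S y := by
  rintro v ⟨hw, hpolar⟩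
  set ε : ℕ → ℝ := fun j => 1 / ((j : ℝ) + 1)
  have hε : ∀ j, 0 < ε j := fun j => by positivity
  choose u huT hle hnormal using
    fun j => exists_mem_tangentConeSeq_sub_mem_limNormal hS hw (w + ε j • v)
  set d : ℕ → E := fun j => (ε j)⁻¹ • (u j - w)
  have hud : ∀ j, w + ε j • d j = u j := fun j => by
    rw [smul_inv_smul₀ (hε j).ne']
    abel
  have hvd : ∀ j, v - d j = (ε j)⁻¹ • (w + ε j • v - u j) := fun j => by
    rw [← hud j, add_sub_add_left_eq_sub, ← smul_sub, inv_smul_smul₀ (hε j).ne']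
  have hdv : ∀ j, ‖v - d j‖ ≤ ‖v‖ := fun j => by
    have h := hle j
    rw [add_sub_cancel_left, norm_smul] at h
    rw [hvd, norm_smul, norm_inv]
    exact inv_mul_le_of_le_mul₀ (norm_nonneg _) (norm_nonneg _) h
  have hbdd : ∀ j, d j ∈ Metric.closedBall v ‖v‖ := fun j => by
    rw [Metric.mem_closedBall, dist_comm, dist_eq_norm]
    exact hdv j
  obtain ⟨L, -, φ, hφ, hdφ⟩ := tendsto_subseq_of_bounded Metric.isBounded_closedBall hbdd
  have hL : L ∈ tangentConeSeq (tangentConeSeq S y) w :=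
    ⟨ε ∘ φ, d ∘ φ, fun i => hε _,
      (tendsto_one_div_add_atTop_nhds_zero_nat (𝕜 := ℝ)).comp hφ.tendsto_atTop, hdφ,
      fun i => (hud (φ i)).symm ▸ huT (φ i)⟩
  have hL0 : L = 0 := eq_zero_of_norm_sub_le_of_inner_nonpos
    (le_of_tendsto' (tendsto_const_nhds.sub hdφ).norm fun i => hdv _) (hpolar L hL)
  have hlim : Tendsto (fun i => v - d (φ i)) atTop (𝓝 v) := by
    simpa [hL0] using tendsto_const_nhds.sub hdφ
  refine (isClosed_limNormal S y).mem_of_tendsto hlim (Eventually.of_forall fun i => ?_)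
  rw [hvd]
  exact smul_mem_limNormal (hnormal _) (inv_nonneg.2 (hε _).le)

theorem limNormal_tangentConeSeq_subset {S : Set E} (hS : IsClosed S) (y w : E) :
    limNormal (tangentConeSeq S y) w ⊆ limNormal S y := by
  rintro v ⟨zk, vk, -, hvk, -, hv⟩
  exact (isClosed_limNormal S y).mem_of_tendsto hv (Eventually.of_forall fun k =>
    regNormal_tangentConeSeq_subset_limNormal hS y (zk k) (hvk k))

theorem limNormal_iterTangent_subset (D : Set E) (y : E) (vs : List E) (v : E) :
    limNormal (iterTangent D y vs) v ⊆ limNormal (tangentConeSeq D y) 0 := by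
  induction vs generalizing v with
  | nil =>
    exact limNormal_subset_limNormal_zero (fun _ hc _ hw => smul_mem_tangentConeSeq hw hc) v
  | cons v' vs ih =>
    exact (limNormal_tangentConeSeq_subset (isClosed_iterTangent D y vs) v' v).trans (ih v')

end Proximal

theorem stmt8_general {s : ℕ} (D : Set (Rd s)) (hD : IsClosed D) (y : Rd s) :
    ∀ (vs : List (Rd s)) (v : Rd s),
      regNormal (iterTangent D y vs) v ⊆ limNormal (iterTangent D y vs) v ∧
      limNormal (iterTangent D y vs) v ⊆ limNormal (tangentConeSeq D y) 0 ∧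
      limNormal (tangentConeSeq D y) 0 ⊆ limNormal D y :=
  fun vs v => ⟨regNormal_subset_limNormal _ _, limNormal_iterTangent_subset D y vs v,
    limNormal_tangentConeSeq_subset hD y 0⟩

theorem stmt8 {s : ℕ} (D : Set (Rd s)) (hD : IsClosed D) (y : Rd s) (hy : y ∈ D) :
    ∀ (vs : List (Rd s)) (v : Rd s),
      regNormal (iterTangent D y vs) v ⊆ limNormal (iterTangent D y vs) v ∧
      limNormal (iterTangent D y vs) v ⊆ limNormal (tangentConeSeq D y) 0 ∧
      limNormal (tangentConeSeq D y) 0 ⊆ limNormal D y :=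
  stmt8_general D hD y
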